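/- Every partial 3-tree is 3-realizable: for every Euclidean realizable edge-length assignment d on a partial 3-tree G, there is a realization of (G, d) in ℝ³. -/

import Mathlib

/-!
Call `G` flattenable in `ℝⁿ` if every placement of its vertices in some Euclidean space can be
replaced by one in `ℝⁿ` with the same edge lengths. This passes to spanning subgraphs, so it
suffices to flatten complete 3-trees into `ℝ³`, by induction. Four points span an affine subspace
of dimension at most 3, which handles `K₄`. For an apex `p` over a triangle `abc` that is already
flattened to `a'b'c'`: place `a, b, c, p` congruently in `ℝ³`, then move the copy of `abc` onto
`a'b'c'` by an isometry of `ℝ³`. That isometry exists because congruent families have equal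
Gram matrices relative to a base point, and families with equal Gram matrices differ by a linear
isometry.
-/

/-- `f : V → ℝᵏ` is a realization of the graph `G` with edge-length assignment `d`:
every edge `{u,v}` of `G` is drawn with length `d {u,v}`. -/
def IsRealization {V : Type} (G : SimpleGraph V) (d : Sym2 V → ℝ)
    (k : ℕ) (f : V → EuclideanSpace ℝ (Fin k)) : Prop :=
  ∀ u v : V, G.Adj u v → dist (f u) (f v) = d s(u, v)

/-- The edge-length assignment `d` on `G` is Euclidean realizable:
`(G, d)` has a realization in `ℝᵏ` for some `k ≥ 1`. -/
def EuclideanRealizable {V : Type} (G : SimpleGraph V) (d : Sym2 V → ℝ) : Prop :=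
  ∃ k : ℕ, 1 ≤ k ∧ ∃ f : V → EuclideanSpace ℝ (Fin k), IsRealization G d k f

/-- `G` is `n`-realizable: every Euclidean realizable (nonnegative) edge-length
assignment of `G` has a realization in `ℝⁿ`. -/
def DRealizable {V : Type} (G : SimpleGraph V) (n : ℕ) : Prop :=
  ∀ d : Sym2 V → ℝ, (∀ e ∈ G.edgeSet, 0 ≤ d e) → EuclideanRealizable G d →
    ∃ f : V → EuclideanSpace ℝ (Fin n), IsRealization G d n f

/-- Add a new (apex) vertex adjacent to exactly the three vertices `a`, `b`, `c`. -/
def addApexToTriangle {V : Type} (G : SimpleGraph V) (a b c : V) :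
    SimpleGraph (Option V) :=
  SimpleGraph.fromEdgeSet
    (Sym2.map Option.some '' G.edgeSet ∪
      {s((none : Option V), some a), s((none : Option V), some b), s((none : Option V), some c)})

/-- Complete 3-trees: `K₄` is a complete 3-tree, and adding a new vertex adjacent to
exactly the three vertices of a triangle of a complete 3-tree yields a complete 3-tree
(closed under graph isomorphism). -/
inductive IsComplete3Tree : ∀ {V : Type}, SimpleGraph V → Prop
  | base : IsComplete3Tree (⊤ : SimpleGraph (Fin 4))
  | extend {V : Type} {G : SimpleGraph V} (a b c : V)
      (hab : G.Adj a b) (hac : G.Adj a c) (hbc : G.Adj b c)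
      (hG : IsComplete3Tree G) : IsComplete3Tree (addApexToTriangle G a b c)
  | iso {V W : Type} {G : SimpleGraph V} {H : SimpleGraph W}
      (e : G ≃g H) (hG : IsComplete3Tree G) : IsComplete3Tree H

open Module
open scoped Congruent RealInnerProductSpace

open Module
open scoped Congruent RealInnerProductSpace

section Geometry

variable {E F : Type*} [NormedAddCommGroup E] [InnerProductSpace ℝ E]
  [NormedAddCommGroup F] [InnerProductSpace ℝ F]

theorem LinearIsometry.nonempty_of_finrank_le [FiniteDimensional ℝ E] [FiniteDimensional ℝ F]
    (h : finrank ℝ E ≤ finrank ℝ F) : Nonempty (E →ₗᵢ[ℝ] F) := by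
  let b := (stdOrthonormalBasis ℝ E).toBasis
  let c := stdOrthonormalBasis ℝ F
  have hb : Orthonormal ℝ b := by
    rw [OrthonormalBasis.coe_toBasis]; exact (stdOrthonormalBasis ℝ E).orthonormal
  have hc : Orthonormal ℝ (b.constr ℝ (c ∘ Fin.castLE h) ∘ b) := by
    rw [show b.constr ℝ (c ∘ Fin.castLE h) ∘ b = c ∘ Fin.castLE h from
      funext (b.constr_basis ℝ _)]
    exact c.orthonormal.comp _ (Fin.castLE_injective h)
  exact ⟨(b.constr ℝ (c ∘ Fin.castLE h)).isometryOfOrthonormal hb hc⟩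

theorem inner_linearCombination_eq_of_inner_eq {ι : Type*} {u v : ι → F}
    (h : ∀ i j, ⟪u i, u j⟫ = ⟪v i, v j⟫) (c c' : ι →₀ ℝ) :
    ⟪Finsupp.linearCombination ℝ u c, Finsupp.linearCombination ℝ u c'⟫ =
      ⟪Finsupp.linearCombination ℝ v c, Finsupp.linearCombination ℝ v c'⟫ := by
  simp only [Finsupp.linearCombination_apply, Finsupp.sum_inner, Finsupp.inner_sum,
    real_inner_smul_left, real_inner_smul_right, h]

theorem exists_linearIsometry_comp_eq_of_inner_eq [FiniteDimensional ℝ F] {ι : Type*}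
    {u v : ι → F} (h : ∀ i j, ⟪u i, u j⟫ = ⟪v i, v j⟫) :
    ∃ T : F →ₗᵢ[ℝ] F, T ∘ u = v := by
  set L := Finsupp.linearCombination ℝ u
  set M := Finsupp.linearCombination ℝ v
  have hnorm (c : ι →₀ ℝ) : ‖M c‖ = ‖L c‖ := by
    rw [norm_eq_sqrt_real_inner, norm_eq_sqrt_real_inner,
      inner_linearCombination_eq_of_inner_eq h]
  have hker : LinearMap.ker L ≤ LinearMap.ker M := fun c hc => by
    rw [LinearMap.mem_ker, ← norm_eq_zero, hnorm, norm_eq_zero, ← LinearMap.mem_ker]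
    exact hc
  -- `T₀ (L c) = M c` is well defined because `ker L ≤ ker M`
  let T₀ : LinearMap.range L →ₗ[ℝ] F :=
    (LinearMap.ker L).liftQ M hker ∘ₗ L.quotKerEquivRange.symm.toLinearMap
  have hT₀ (c : ι →₀ ℝ) : T₀ ⟨L c, LinearMap.mem_range_self L c⟩ = M c := by
    simp [T₀, LinearMap.quotKerEquivRange_symm_apply_image]
  let T₁ : LinearMap.range L →ₗᵢ[ℝ] F :=
    ⟨T₀, by rintro ⟨_, c, rfl⟩; exact (hT₀ c).symm ▸ hnorm c⟩
  refine ⟨T₁.extend, funext fun i => ?_⟩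
  have hL : L (Finsupp.single i 1) = u i := by simp [L]
  have hM : M (Finsupp.single i 1) = v i := by simp [M]
  have hext := T₁.extend_apply ⟨L (Finsupp.single i 1), LinearMap.mem_range_self L _⟩
  rw [Function.comp_apply, ← hL, ← hM, ← hT₀]
  exact hext

theorem Congruent.exists_isometry_comp_eq [FiniteDimensional ℝ F] {ι : Type*} {p q : ι → F}
    (h : p ≅ q) : ∃ φ : F → F, Isometry φ ∧ φ ∘ p = q := by
  rcases isEmpty_or_nonempty ι with hι | ⟨⟨i₀⟩⟩
  · exact ⟨id, isometry_id, funext hι.elim⟩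
  rw [congruent_iff_dist_eq] at h
  have hinner (i j : ι) : ⟪p i - p i₀, p j - p i₀⟫ = ⟪q i - q i₀, q j - q i₀⟫ := by
    simp only [real_inner_eq_norm_mul_self_add_norm_mul_self_sub_norm_sub_mul_self_div_two,
      sub_sub_sub_cancel_right, ← dist_eq_norm, h]
  obtain ⟨T, hT⟩ := exists_linearIsometry_comp_eq_of_inner_eq hinner
  refine ⟨fun x => T (x - p i₀) + q i₀, Isometry.of_dist_eq fun x y => ?_, funext fun i => ?_⟩
  · rw [dist_add_right, T.dist_map, dist_sub_right]
  · have hTi : T (p i - p i₀) = q i - q i₀ := congrFun hT i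
    simp only [Function.comp_apply, hTi, sub_add_cancel]

theorem exists_congruent_of_card_le [FiniteDimensional ℝ F] {ι : Type*} [Fintype ι]
    (x : ι → E) (h : Fintype.card ι ≤ finrank ℝ F + 1) : ∃ y : ι → F, x ≅ y := by
  rcases isEmpty_or_nonempty ι with hι | ⟨⟨i₀⟩⟩
  · exact ⟨hι.elim, Congruent.of_subsingleton_index⟩
  set W := vectorSpan ℝ (Set.range x)
  have hW : finrank ℝ W ≤ finrank ℝ F :=
    (finrank_vectorSpan_range_le ℝ x
      (Nat.sub_add_cancel (Fintype.card_pos_iff.mpr ⟨i₀⟩)).symm).trans (by omega)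
  obtain ⟨φ⟩ := LinearIsometry.nonempty_of_finrank_le hW
  refine ⟨fun i => φ ⟨x i - x i₀, vsub_mem_vectorSpan ℝ (Set.mem_range_self i)
    (Set.mem_range_self i₀)⟩, congruent_iff_dist_eq.mpr fun i j => ?_⟩
  rw [φ.dist_map, Subtype.dist_eq, dist_sub_right]

theorem Congruent.exists_dist_eq [FiniteDimensional ℝ F] {ι : Type*} [Fintype ι]
    (hι : Fintype.card ι ≤ finrank ℝ F) {x : ι → E} {y : ι → F} (h : x ≅ y) (p : E) :
    ∃ q : F, ∀ i, dist q (y i) = dist p (x i) := by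
  obtain ⟨z, hz⟩ := exists_congruent_of_card_le (F := F) (fun o : Option ι => o.elim p x)
    (by rwa [Fintype.card_option, add_le_add_iff_right])
  obtain ⟨φ, hφ, hφz⟩ := ((hz.index_map some).symm.trans h).exists_isometry_comp_eq
  refine ⟨φ (z none), fun i => ?_⟩
  rw [← hφz, Function.comp_apply, hφ.dist_eq]
  exact (congruent_iff_dist_eq.mp hz none (some i)).symm

end Geometry

def Flattenable {V : Type} (G : SimpleGraph V) (n : ℕ) : Prop :=
  ∀ (k : ℕ) (f : V → EuclideanSpace ℝ (Fin k)), ∃ g : V → EuclideanSpace ℝ (Fin n),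
    ∀ u v, G.Adj u v → dist (g u) (g v) = dist (f u) (f v)

namespace Flattenable

variable {V W : Type} {G G' : SimpleGraph V} {n : ℕ}

theorem mono_left (hle : G' ≤ G) (hG : Flattenable G n) : Flattenable G' n := fun k f =>
  (hG k f).imp fun _ hg u v huv => hg u v (hle huv)

theorem of_iso {H : SimpleGraph W} (e : G ≃g H) (hG : Flattenable G n) : Flattenable H n := by
  intro k f
  obtain ⟨g, hg⟩ := hG k (f ∘ e)
  refine ⟨g ∘ e.symm, fun u v huv => ?_⟩
  simpa using hg (e.symm u) (e.symm v) (e.symm.map_adj_iff.mpr huv)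

theorem dRealizable (hG : Flattenable G n) : DRealizable G n := by
  rintro d - ⟨k, -, f, hf⟩
  obtain ⟨g, hg⟩ := hG k f
  exact ⟨g, fun u v huv => (hg u v huv).trans (hf u v huv)⟩

end Flattenable

theorem flattenable_of_card_le {V : Type} [Fintype V] (G : SimpleGraph V) {n : ℕ}
    (h : Fintype.card V ≤ n + 1) : Flattenable G n := by
  intro k f
  obtain ⟨g, hg⟩ := exists_congruent_of_card_le (F := EuclideanSpace ℝ (Fin n)) f
    (by rwa [finrank_euclideanSpace_fin])
  exact ⟨g, fun u v _ => (congruent_iff_dist_eq.mp hg u v).symm⟩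

section AddApexToTriangle

variable {V : Type} {G : SimpleGraph V} {a b c : V}

theorem addApexToTriangle_adj_some_some {u v : V} :
    (addApexToTriangle G a b c).Adj (some u) (some v) ↔ G.Adj u v := by
  rw [addApexToTriangle, SimpleGraph.fromEdgeSet_adj, Set.mem_union, ← Sym2.map_mk,
    (Sym2.map.injective (Option.some_injective V)).mem_set_image, SimpleGraph.mem_edgeSet]
  simpa using fun h : G.Adj u v => h.ne

theorem addApexToTriangle_adj_none_some {v : V} :
    (addApexToTriangle G a b c).Adj none (some v) ↔ v = a ∨ v = b ∨ v = c := by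
  have hnone (x : Sym2 V) : Sym2.map some x ≠ s(none, some v) := fun hx => by
    have : none ∈ Sym2.map some x := hx ▸ Sym2.mem_mk_left _ _
    simp at this
  simp [addApexToTriangle, hnone]

theorem Flattenable.addApexToTriangle (hab : G.Adj a b) (hac : G.Adj a c)
    (hbc : G.Adj b c) (hG : Flattenable G 3) : Flattenable (addApexToTriangle G a b c) 3 := by
  classical
  intro k F
  obtain ⟨g, hg⟩ := hG k (F ∘ some)
  set s : Finset V := {a, b, c}
  have hclique : G.IsClique (s : Set V) := by
    simpa [s] using (SimpleGraph.is3Clique_triple_iff.mpr ⟨hab, hac, hbc⟩).isClique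
  have hcong : (fun i : s => F (some i)) ≅ (fun i : s => g i) := by
    refine congruent_iff_dist_eq.mpr fun i j => ?_
    by_cases hij : i = j
    · simp [hij]
    · exact (hg i j (hclique i.2 j.2 (Subtype.coe_ne_coe.mpr hij))).symm
  obtain ⟨q, hq⟩ := hcong.exists_dist_eq (by simpa using Finset.card_le_three) (F none)
  refine ⟨fun o => o.elim q g, ?_⟩
  rintro (_ | u) (_ | v) huv
  · exact absurd rfl huv.ne
  · exact hq ⟨v, by simpa [s] using addApexToTriangle_adj_none_some.mp huv⟩
  · rw [dist_comm, dist_comm (F _)]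
    exact hq ⟨u, by simpa [s] using addApexToTriangle_adj_none_some.mp huv.symm⟩
  · exact hg u v (addApexToTriangle_adj_some_some.mp huv)

end AddApexToTriangle

theorem IsComplete3Tree.flattenable {V : Type} {G : SimpleGraph V} (h : IsComplete3Tree G) :
    Flattenable G 3 := by
  induction h with
  | base => exact flattenable_of_card_le _ (by simp)
  | extend a b c hab hac hbc _ ih => exact ih.addApexToTriangle hab hac hbc
  | iso e _ ih => exact ih.of_iso e

theorem partial3Tree_threeRealizable_general {V : Type} (G' : SimpleGraph V)
    (h : ∃ G : SimpleGraph V, IsComplete3Tree G ∧ G' ≤ G) :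
    DRealizable G' 3 := by
  obtain ⟨G, hG, hle⟩ := h
  exact (hG.flattenable.mono_left hle).dRealizable

/-- every partial 3-tree (a spanning subgraph of a complete 3-tree)
is 3-realizable. -/
theorem partial3Tree_threeRealizable {V : Type} [Fintype V] (G' : SimpleGraph V)
    (h : ∃ G : SimpleGraph V, IsComplete3Tree G ∧ G' ≤ G) :
    DRealizable G' 3 :=
  partial3Tree_threeRealizable_general G' h
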